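/- Let G be a connected simple graph with α(G) ≥ 3, and let H be a connected induced subgraph of G with α(H) = α(G) having the minimum number of vertices among all such subgraphs. Let T be any spanning tree of H, and let M be a set of edges ww' of T such that w has degree 1 in T, w' has degree 2 in T, and for every vertex x of G outside V(T), if xw is an edge of G then xw' is an edge of G. Then pc_opt(G) ≤ |E(T)| + Δ(T) − |M|. -/

import Mathlib

/-- A set of vertices is independent: pairwise nonadjacent. -/
def IndepSet {V : Type*} (G : SimpleGraph V) (s : Set V) : Prop :=
  s.Pairwise fun u v => ¬ G.Adj u v

/-- The independence number of a graph: the maximum size of an independent set. -/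
noncomputable def indepNum {V : Type*} (G : SimpleGraph V) : ℕ :=
  sSup {n | ∃ t : Finset V, IndepSet G ↑t ∧ t.card = n}

/-- An edge-colored graph is properly connected if between every pair of distinct
vertices there is a path in which no two consecutive edges have the same color. -/
def ProperlyConnected {V : Type*} (G : SimpleGraph V) (c : Sym2 V → ℕ) : Prop :=
  ∀ u v : V, u ≠ v → ∃ p : G.Walk u v, p.IsPath ∧ (p.edges.map c).Chain' (· ≠ ·)

/-- The optimal proper connection number of a monochromatic graph `G` (all edges
initially colored `1`): the minimum of `p + q` over all final colorings `c` making
`G` properly connected, where `p` is the number of recolored edges (edges whose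
color is no longer `1`) and `q` is the number of distinct new colors used. -/
noncomputable def pcOpt {V : Type*} (G : SimpleGraph V) : ℕ :=
  sInf {n | ∃ c : Sym2 V → ℕ, ProperlyConnected G c ∧
    n = {e | e ∈ G.edgeSet ∧ c e ≠ 1}.ncard
      + (c '' {e | e ∈ G.edgeSet ∧ c e ≠ 1}).ncard}

/-- The degree of a vertex. -/
noncomputable def vdeg {V : Type*} (G : SimpleGraph V) (v : V) : ℕ :=
  (G.neighborSet v).ncard

/-- The maximum degree of a graph. -/
noncomputable def maxDeg {V : Type*} (G : SimpleGraph V) : ℕ :=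
  sSup {n | ∃ v, vdeg G v = n}

/-- A connected graph is α-minimal if every vertex is either a cut-vertex or its
deletion decreases the independence number. -/
def AlphaMinimal {V : Type*} (G : SimpleGraph V) : Prop :=
  G.Connected ∧ ∀ v : V,
    ¬ (G.induce ({v}ᶜ : Set V)).Connected ∨
      indepNum (G.induce ({v}ᶜ : Set V)) < indepNum G

/-!
Recolour the edges of the spanning tree `T` that are not in `M` by a proper edge colouring of `T`
with the `Δ(T)` new colours `2, …, Δ(T) + 1`, and leave every other edge with colour `1`; this
costs `|E(T)| - |M| + Δ(T)`.

Deleting a leaf of `T` keeps `H = G[U]` connected, so by minimality every leaf of `T` lies in every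
maximum independent set `I` of `H`, which is also a maximum independent set of `G`. With
`α(G) ≥ 3` this forces the edges of `M` to be disjoint, so paths in `T` stay properly coloured.
Every vertex `x` outside `U` has a neighbour in `I`, and moving it from the leaf end of an edge of
`M` to the other end gives, for each `v ∈ U` not adjacent to `x`, a neighbour `a ∈ U` of `x` from
which the path of `T` to `v` starts with a recoloured edge; prefixing the edge `xa` of colour `1`
keeps the path proper. Two non-adjacent outside vertices get distinct such neighbours, since
otherwise they could replace a single vertex of `I`.
-/

open Finset

section IndependenceNumber

variable {V : Type*} (G : SimpleGraph V)

lemma indepNum_eq_simpleGraph_indepNum : indepNum G = G.indepNum := by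
  refine congrArg sSup (Set.ext fun n => ⟨?_, ?_⟩)
  · rintro ⟨t, ht, rfl⟩
    exact ⟨t, ht, rfl⟩
  · rintro ⟨t, ht⟩
    exact ⟨t, ht.isIndepSet, ht.card_eq⟩

lemma exists_indepSet_card_eq_indepNum : ∃ t : Finset V, IndepSet G t ∧ #t = indepNum G := by
  obtain ⟨t, ht⟩ := G.exists_isNIndepSet_indepNum
  exact ⟨t, ht.isIndepSet, by rw [ht.card_eq, indepNum_eq_simpleGraph_indepNum]⟩

lemma exists_indepSet_subset_card_eq_indepNum_induce (W : Set V) :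
    ∃ t : Finset V, ↑t ⊆ W ∧ IndepSet G t ∧ #t = indepNum (G.induce W) := by
  obtain ⟨t, ht, hcard⟩ := exists_indepSet_card_eq_indepNum (G.induce W)
  refine ⟨t.map (Function.Embedding.subtype _), by simp, ?_, by simpa using hcard⟩
  rintro _ ha _ hb hab
  simp only [coe_map, Function.Embedding.coe_subtype, Set.mem_image, mem_coe] at ha hb
  obtain ⟨a, ha, rfl⟩ := ha
  obtain ⟨b, hb, rfl⟩ := hb
  exact ht ha hb (fun h => hab (congrArg _ h))

variable {G} [Finite V]

lemma IndepSet.card_le_indepNum {t : Finset V} (ht : IndepSet G t) : #t ≤ indepNum G :=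
  indepNum_eq_simpleGraph_indepNum G ▸ SimpleGraph.IsIndepSet.card_le_indepNum ht

lemma IndepSet.card_le_indepNum_induce {W : Set V} {t : Finset V} (ht : IndepSet G t)
    (htW : ↑t ⊆ W) : #t ≤ indepNum (G.induce W) := by
  classical
  have hsub : IndepSet (G.induce W) ↑(t.subtype (· ∈ W)) := fun a ha b hb hab =>
    ht (by simpa using ha) (by simpa using hb) (Subtype.coe_ne_coe.mpr hab)
  calc #t = #(t.subtype (· ∈ W)) := by
        rw [card_subtype, filter_true_of_mem fun x hx => htW hx]
    _ ≤ _ := hsub.card_le_indepNum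

lemma indepNum_induce_le (W : Set V) : indepNum (G.induce W) ≤ indepNum G := by
  obtain ⟨t, -, ht, hcard⟩ := exists_indepSet_subset_card_eq_indepNum_induce G W
  exact hcard ▸ ht.card_le_indepNum

lemma IndepSet.exists_adj_of_indepNum_le {t : Finset V} (ht : IndepSet G t)
    (hcard : indepNum G ≤ #t) {x : V} (hx : x ∉ t) : ∃ y ∈ t, G.Adj x y := by
  classical
  by_contra! h
  have hins : IndepSet G ↑(insert x t) := by
    rw [coe_insert]
    exact ht.insert fun y hy _ => ⟨h y hy, fun h' => h y hy h'.symm⟩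
  have := hins.card_le_indepNum
  rw [card_insert_of_notMem hx] at this
  omega

/-- Otherwise `x` and `x'` could replace their unique common neighbour in `t`. -/
lemma IndepSet.exists_adj_adj_ne_of_indepNum_le {t : Finset V} (ht : IndepSet G t)
    (hcard : indepNum G ≤ #t) {x x' : V} (hx : x ∉ t) (hx' : x' ∉ t) (hxx' : x ≠ x')
    (hadj : ¬G.Adj x x') : ∃ y ∈ t, ∃ y' ∈ t, y ≠ y' ∧ G.Adj x y ∧ G.Adj x' y' := by
  classical
  obtain ⟨y, hy, hxy⟩ := ht.exists_adj_of_indepNum_le hcard hx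
  by_contra! h
  have hx'y (z : V) (hz : z ∈ t.erase y) : ¬G.Adj x' z := fun hz' =>
    h y hy z (mem_of_mem_erase hz) (ne_of_mem_erase hz).symm hxy hz'
  have hxz (z : V) (hz : z ∈ t.erase y) : ¬G.Adj x z := fun hz' => by
    obtain ⟨y', hy', hx'y'⟩ := ht.exists_adj_of_indepNum_le hcard hx'
    obtain rfl | hne := eq_or_ne y' y
    · exact h z (mem_of_mem_erase hz) y' hy' (ne_of_mem_erase hz) hz' hx'y'
    · exact hx'y y' (mem_erase.mpr ⟨hne, hy'⟩) hx'y'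
  have hins : IndepSet G ↑(insert x (insert x' (t.erase y))) := by
    rw [coe_insert, coe_insert]
    refine ((ht.mono (coe_subset.mpr (erase_subset y t))).insert fun z hz _ =>
      ⟨hx'y z hz, fun h' => hx'y z hz h'.symm⟩).insert fun z hz _ => ?_
    rcases hz with rfl | hz
    · exact ⟨hadj, fun h' => hadj h'.symm⟩
    · exact ⟨hxz z hz, fun h' => hxz z hz h'.symm⟩
  have := hins.card_le_indepNum
  rw [card_insert_of_notMem (by simp [hxx', hx, mem_of_mem_erase.mt]),
    card_insert_of_notMem (fun h => hx' (mem_of_mem_erase h)), card_erase_of_mem hy] at this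
  have : 0 < #t := card_pos.mpr ⟨y, hy⟩
  omega

end IndependenceNumber

namespace SimpleGraph

variable {W : Type*} {T : SimpleGraph W} {u v w : W}

lemma Preconnected.mem_of_neighborSet_subset (hT : T.Preconnected) {S : Set W}
    (hS : ∀ u ∈ S, T.neighborSet u ⊆ S) (hu : u ∈ S) (v : W) : v ∈ S := by
  obtain ⟨p⟩ := hT u v
  induction p with
  | nil => exact hu
  | cons h _ ih => exact ih (hS _ hu h)

variable [Finite W]

lemma neighborSet_eq_singleton_of_vdeg_eq_one (hv : vdeg T v = 1) (hu : T.Adj v u) :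
    T.neighborSet v = {u} :=
  (Set.eq_of_subset_of_ncard_le (Set.singleton_subset_iff.mpr hu)
    (by rw [Set.ncard_singleton]; exact hv.le)).symm

lemma neighborSet_eq_pair_of_vdeg_eq_two (hv : vdeg T v = 2) (hu : T.Adj v u) (hw : T.Adj v w)
    (huw : u ≠ w) : T.neighborSet v = {u, w} :=
  (Set.eq_of_subset_of_ncard_le (Set.insert_subset hu (Set.singleton_subset_iff.mpr hw))
    (by rw [Set.ncard_pair huw]; exact hv.le)).symm

end SimpleGraph

section ProperPaths

namespace SimpleGraph

variable {V : Type*} {G : SimpleGraph V} {c : Sym2 V → ℕ} {x a b : V}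

def IsProperEdgeColoring (G : SimpleGraph V) (c : Sym2 V → ℕ) : Prop :=
  ∀ ⦃u v w⦄, G.Adj u v → G.Adj v w → u ≠ w → c s(u, v) ≠ c s(v, w)

lemma Walk.IsPath.isChain_map_edges {p : G.Walk a b} (hp : p.IsPath)
    (hc : G.IsProperEdgeColoring c) :
    (p.edges.map c).IsChain (· ≠ ·) := by
  induction p with
  | nil => simp
  | @cons u v w h q ih =>
    cases q with
    | nil => simp
    | @cons _ d _ h' q' =>
      rw [Walk.cons_isPath_iff] at hp
      have hud : u ≠ d := by
        rintro rfl
        exact hp.2 (by simp)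
      simp only [Walk.edges_cons, List.map_cons] at ih ⊢
      exact List.IsChain.cons_cons (hc h h' hud) (ih hp.1)

lemma Walk.IsPath.isChain_map_edges_cons {p : G.Walk a b} (hp : p.IsPath)
    (hchain : (p.edges.map c).IsChain (· ≠ ·)) (hxa : G.Adj x a) (hx : x ∉ p.support)
    (hhead : (p.edges.map c).head? ≠ some (c s(x, a))) :
    (Walk.cons hxa p).IsPath ∧ ((Walk.cons hxa p).edges.map c).IsChain (· ≠ ·) := by
  refine ⟨hp.cons hx, ?_⟩
  rw [Walk.edges_cons, List.map_cons, List.isChain_cons]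
  exact ⟨fun y hy h => hhead (h ▸ hy), hchain⟩

lemma Walk.IsPath.isChain_map_edges_concat {p : G.Walk a b} (hp : p.IsPath)
    (hchain : (p.edges.map c).IsChain (· ≠ ·)) (hbx : G.Adj b x) (hx : x ∉ p.support)
    (hlast : (p.edges.map c).getLast? ≠ some (c s(b, x))) :
    (p.concat hbx).IsPath ∧ ((p.concat hbx).edges.map c).IsChain (· ≠ ·) := by
  refine ⟨hp.concat hx hbx, ?_⟩
  rw [Walk.edges_concat, List.concat_eq_append, List.map_append, List.isChain_append]
  refine ⟨hchain, by simp, fun y hy z hz h => hlast ?_⟩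
  simp_all

lemma isChain_ne_reverse {l : List ℕ} (h : l.IsChain (· ≠ ·)) : l.reverse.IsChain (· ≠ ·) :=
  List.isChain_reverse.mpr (h.imp fun _ _ h => h.symm)

def HasProperPath (G : SimpleGraph V) (c : Sym2 V → ℕ) (u v : V) : Prop :=
  ∃ p : G.Walk u v, p.IsPath ∧ (p.edges.map c).IsChain (· ≠ ·)

lemma HasProperPath.symm (h : G.HasProperPath c a b) : G.HasProperPath c b a := by
  obtain ⟨p, hp, hchain⟩ := h
  refine ⟨p.reverse, hp.reverse, ?_⟩
  rw [Walk.edges_reverse, List.map_reverse]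
  exact isChain_ne_reverse hchain

lemma Adj.hasProperPath (h : G.Adj a b) : G.HasProperPath c a b :=
  ⟨Walk.cons h Walk.nil, by simp [h.ne], by simp⟩

end SimpleGraph

end ProperPaths

section TreeEdgeColoring

/-- The `k`-th natural number different from `a`. -/
def skip (a k : ℕ) : ℕ := if k < a then k else k + 1

lemma skip_ne (a k : ℕ) : skip a k ≠ a := by unfold skip; split <;> omega

lemma skip_injective (a : ℕ) : Function.Injective (skip a) := by
  intro k k' h; unfold skip at h; split at h <;> split at h <;> omega

lemma skip_le (a k : ℕ) : skip a k ≤ k + 1 := by unfold skip; split <;> omega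

namespace SimpleGraph

variable {W : Type*} {T : SimpleGraph W} {r p q u v w : W}

def IsParent (T : SimpleGraph W) (r p v : W) : Prop := T.Adj p v ∧ T.dist r p + 1 = T.dist r v

lemma IsParent.not_isParent (h : T.IsParent r p v) : ¬T.IsParent r v p := fun h' => by
  have := h.2; have := h'.2; omega

lemma IsParent.ne_root (h : T.IsParent r p v) : v ≠ r := by
  rintro rfl; have := h.2; simp at this

lemma IsTree.exists_isParent (hT : T.IsTree) (hv : v ≠ r) : ∃ p, T.IsParent r p v := by
  obtain ⟨P, -, hP⟩ := hT.connected.exists_path_of_dist v r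
  have hnil : ¬P.Nil := Walk.not_nil_of_ne hv
  have hle : T.dist r P.snd ≤ P.length - 1 := by
    rw [dist_comm]
    simpa [Walk.length_tail_add_one hnil] using dist_le P.tail
  rw [dist_comm] at hP
  refine ⟨P.snd, (P.adj_snd hnil).symm, ?_⟩
  rcases hT.dist_eq_dist_add_one_of_adj r (P.adj_snd hnil) with h | h <;> omega

lemma IsParent.exists_concat_isPath (h : T.IsParent r p v) (hT : T.IsTree) :
    ∃ P : T.Walk r p, (P.concat h.1).IsPath := by
  classical
  obtain ⟨P, hP, hlen⟩ := hT.connected.exists_path_of_dist r p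
  refine ⟨P, hP.concat (fun hv => ?_) h.1⟩
  have := (dist_le (P.takeUntil v hv)).trans (P.length_takeUntil_le_length hv)
  have := h.2
  omega

lemma IsTree.isParent_unique (hT : T.IsTree) (hp : T.IsParent r p v) (hq : T.IsParent r q v) :
    p = q := by
  classical
  obtain ⟨P, hP⟩ := hp.exists_concat_isPath hT
  obtain ⟨Q, hQ⟩ := hq.exists_concat_isPath hT
  have := congrArg Subtype.val ((hT.isAcyclic.subsingleton_path r v).elim ⟨_, hP⟩ ⟨_, hQ⟩)
  exact (Walk.concat_inj this).1

lemma IsTree.isParent_or_isParent (hT : T.IsTree) (r : W) (h : T.Adj u v) :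
    T.IsParent r u v ∨ T.IsParent r v u := by
  rcases hT.dist_eq_dist_add_one_of_adj r h with h' | h'
  · exact Or.inr ⟨h.symm, h'.symm⟩
  · exact Or.inl ⟨h, h'.symm⟩

noncomputable def childRank (T : SimpleGraph W) (r : W) (ord : W ↪ ℕ) (p v : W) : ℕ :=
  {u | T.IsParent r p u ∧ ord u < ord v}.ncard

open Classical in
/-- The colour of the edge from `v` to its parent: the children of a vertex `p` are coloured
`0, 1, 2, …` in the order `ord`, skipping the colour of the edge from `p` to its own parent. -/
noncomputable def childColor (T : SimpleGraph W) (r : W) (ord : W ↪ ℕ) (v : W) : ℕ :=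
  if h : ∃ p, T.IsParent r p v then
    if h.choose = r then T.childRank r ord h.choose v
    else skip (T.childColor r ord h.choose) (T.childRank r ord h.choose v)
  else 0
termination_by T.dist r v
decreasing_by have := h.choose_spec.2; omega

open Classical in
lemma IsTree.childColor_eq (hT : T.IsTree) (ord : W ↪ ℕ) (h : T.IsParent r p v) :
    T.childColor r ord v = if p = r then T.childRank r ord p v
      else skip (T.childColor r ord p) (T.childRank r ord p v) := by
  have hex : ∃ p, T.IsParent r p v := ⟨p, h⟩
  rw [childColor, dif_pos hex, hT.isParent_unique hex.choose_spec h]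

lemma IsTree.childColor_ne_of_isParent (hT : T.IsTree) (ord : W ↪ ℕ) (hv : T.IsParent r p v)
    (hp : T.IsParent r q p) : T.childColor r ord v ≠ T.childColor r ord p := by
  rw [hT.childColor_eq ord hv, if_neg hp.ne_root]
  exact skip_ne _ _

open Classical in
noncomputable def treeEdgeColor (T : SimpleGraph W) (r : W) (ord : W ↪ ℕ) : Sym2 W → ℕ :=
  Sym2.lift ⟨fun a b => if T.IsParent r a b then T.childColor r ord b
    else if T.IsParent r b a then T.childColor r ord a else 0, fun a b => by
      by_cases hab : T.IsParent r a b
      · simp [hab, hab.not_isParent]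
      · by_cases hba : T.IsParent r b a <;> simp [hab, hba]⟩

lemma treeEdgeColor_of_isParent (ord : W ↪ ℕ) (h : T.IsParent r p v) :
    T.treeEdgeColor r ord s(p, v) = T.childColor r ord v := by
  simp [treeEdgeColor, h]

lemma treeEdgeColor_of_isParent' (ord : W ↪ ℕ) (h : T.IsParent r p v) :
    T.treeEdgeColor r ord s(v, p) = T.childColor r ord v := by
  rw [Sym2.eq_swap, treeEdgeColor_of_isParent ord h]

variable [Finite W] (ord : W ↪ ℕ)

lemma childRank_lt_childRank (hu : T.IsParent r p u) (huv : ord u < ord v) :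
    T.childRank r ord p u < T.childRank r ord p v :=
  Set.ncard_lt_ncard ⟨fun w hw => ⟨hw.1, hw.2.trans huv⟩, fun h => lt_irrefl _ (h ⟨hu, huv⟩).2⟩

lemma childRank_injOn : {u | T.IsParent r p u}.InjOn (T.childRank r ord p) := by
  intro u hu v hv huv
  by_contra hne
  rcases (ord.injective.ne hne).lt_or_gt with h | h
  · exact (childRank_lt_childRank ord hu h).ne huv
  · exact (childRank_lt_childRank ord hv h).ne' huv

lemma childRank_lt_ncard (hv : T.IsParent r p v) :
    T.childRank r ord p v < {u | T.IsParent r p u}.ncard :=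
  Set.ncard_lt_ncard ⟨fun _ hw => hw.1, fun h => lt_irrefl _ (h hv).2⟩

lemma IsTree.ncard_children_add_one_le (hT : T.IsTree) (hp : p ≠ r) :
    {u | T.IsParent r p u}.ncard + 1 ≤ vdeg T p := by
  obtain ⟨q, hq⟩ := hT.exists_isParent hp
  have hqC : q ∉ {u | T.IsParent r p u} := hq.not_isParent
  rw [← Set.ncard_insert_of_notMem hqC]
  refine Set.ncard_le_ncard ?_
  rintro u (rfl | hu)
  exacts [hq.1.symm, hu.1]

lemma IsTree.childColor_lt (hT : T.IsTree) (hv : T.IsParent r p v) :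
    T.childColor r ord v < vdeg T p := by
  have hrank := childRank_lt_ncard ord hv
  rw [hT.childColor_eq ord hv]
  split_ifs with hp
  · exact hrank.trans_le (Set.ncard_le_ncard fun u hu => hu.1)
  · have := hT.ncard_children_add_one_le hp
    have := skip_le (T.childColor r ord p) (T.childRank r ord p v)
    omega

lemma IsTree.childColor_injOn (hT : T.IsTree) :
    {u | T.IsParent r p u}.InjOn (T.childColor r ord) := by
  intro u hu v hv huv
  rw [hT.childColor_eq ord hu, hT.childColor_eq ord hv] at huv
  split_ifs at huv
  exacts [childRank_injOn ord hu hv huv, childRank_injOn ord hu hv (skip_injective _ huv)]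

lemma vdeg_le_maxDeg (T : SimpleGraph W) (v : W) : vdeg T v ≤ maxDeg T :=
  le_csSup ⟨Nat.card W, by rintro _ ⟨u, rfl⟩; exact Set.ncard_le_card _⟩ ⟨v, rfl⟩

lemma IsTree.treeEdgeColor_lt_maxDeg (hT : T.IsTree) (h : T.Adj u v) :
    T.treeEdgeColor r ord s(u, v) < maxDeg T := by
  rcases hT.isParent_or_isParent r h with huv | hvu
  · rw [treeEdgeColor_of_isParent ord huv]
    exact (hT.childColor_lt ord huv).trans_le (vdeg_le_maxDeg T u)
  · rw [treeEdgeColor_of_isParent' ord hvu]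
    exact (hT.childColor_lt ord hvu).trans_le (vdeg_le_maxDeg T v)

lemma IsTree.isProperEdgeColoring_treeEdgeColor (hT : T.IsTree) :
    T.IsProperEdgeColoring (T.treeEdgeColor r ord) := by
  intro u v w huv hvw huw
  rcases hT.isParent_or_isParent r huv with huv | hvu <;>
    rcases hT.isParent_or_isParent r hvw with hvw | hwv
  · rw [treeEdgeColor_of_isParent ord huv, treeEdgeColor_of_isParent ord hvw]
    exact (hT.childColor_ne_of_isParent ord hvw huv).symm
  · exact absurd (hT.isParent_unique huv hwv) huw
  · rw [treeEdgeColor_of_isParent' ord hvu, treeEdgeColor_of_isParent ord hvw]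
    exact fun h => huw (hT.childColor_injOn ord hvu hvw h)
  · rw [treeEdgeColor_of_isParent' ord hvu, treeEdgeColor_of_isParent' ord hwv]
    exact hT.childColor_ne_of_isParent ord hvu hwv

end SimpleGraph

end TreeEdgeColoring

section LiftColoring

namespace SimpleGraph

variable {V : Type*} {G : SimpleGraph V} {U : Set V} {T : SimpleGraph U} {c : Sym2 U → ℕ}

noncomputable def liftColoring (U : Set V) (c : Sym2 U → ℕ) : Sym2 V → ℕ :=
  Function.extend (Sym2.map Subtype.val) c fun _ => 1

lemma liftColoring_map (e : Sym2 U) : liftColoring U c (e.map Subtype.val) = c e :=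
  (Sym2.map.injective Subtype.val_injective).extend_apply _ _ _

lemma liftColoring_of_notMem {x : V} (hx : x ∉ U) (y : V) : liftColoring U c s(x, y) = 1 := by
  refine Function.extend_apply' _ _ _ fun ⟨e, he⟩ => hx ?_
  obtain ⟨z, -, rfl⟩ := Sym2.mem_map.mp (he ▸ Sym2.mem_mk_left x y)
  exact z.2

lemma liftColoring_of_notMem' {x : V} (hx : x ∉ U) (y : V) : liftColoring U c s(y, x) = 1 := by
  rw [Sym2.eq_swap, liftColoring_of_notMem hx]

def liftWalk (hTle : T ≤ G.induce U) {a b : U} (p : T.Walk a b) : G.Walk a b :=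
  p.map (⟨Subtype.val, fun h => hTle h⟩ : T →g G)

lemma Walk.IsPath.liftWalk (hTle : T ≤ G.induce U) {a b : U} {p : T.Walk a b} (hp : p.IsPath) :
    (liftWalk hTle p).IsPath :=
  hp.map Subtype.val_injective

lemma map_edges_liftWalk (hTle : T ≤ G.induce U) {a b : U} (p : T.Walk a b) :
    (liftWalk hTle p).edges.map (liftColoring U c) = p.edges.map c := by
  rw [liftWalk, Walk.edges_map, List.map_map]
  exact List.map_congr_left fun e _ => liftColoring_map e

lemma notMem_support_liftWalk (hTle : T ≤ G.induce U) {x : V} (hx : x ∉ U) {a b : U}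
    (p : T.Walk a b) : x ∉ (liftWalk hTle p).support := by
  rw [liftWalk, Walk.support_map, List.mem_map]
  rintro ⟨z, -, rfl⟩
  exact hx z.2

lemma hasProperPath_of_isPath (hTle : T ≤ G.induce U)
    (hc : T.IsProperEdgeColoring c)
    {a b : U} {p : T.Walk a b} (hp : p.IsPath) :
    G.HasProperPath (liftColoring U c) a b := by
  refine ⟨liftWalk hTle p, hp.liftWalk hTle, ?_⟩
  rw [map_edges_liftWalk]
  exact hp.isChain_map_edges hc

lemma hasProperPath_of_anchor (hTle : T ≤ G.induce U)
    (hc : T.IsProperEdgeColoring c)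
    {x : V} (hx : x ∉ U) {a v : U} (hxa : G.Adj x a) {p : T.Walk a v} (hp : p.IsPath)
    (hhead : (p.edges.map c).head? ≠ some 1) :
    G.HasProperPath (liftColoring U c) x v := by
  have hedges := map_edges_liftWalk (c := c) hTle p
  refine ⟨_, (hp.liftWalk hTle).isChain_map_edges_cons ?_ hxa
    (notMem_support_liftWalk hTle hx p) ?_⟩
  · rw [hedges]; exact hp.isChain_map_edges hc
  · rwa [liftColoring_of_notMem hx, hedges]

lemma hasProperPath_of_anchors (hTle : T ≤ G.induce U)
    (hc : T.IsProperEdgeColoring c)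
    {x x' : V} (hx : x ∉ U) (hx' : x' ∉ U) (hxx' : x ≠ x') {a a' : U} (haa' : a ≠ a')
    (hxa : G.Adj x a) (hx'a' : G.Adj x' a') {p : T.Walk a a'} (hp : p.IsPath)
    (hhead : (p.edges.map c).head? ≠ some 1) (hlast : (p.edges.map c).getLast? ≠ some 1) :
    G.HasProperPath (liftColoring U c) x x' := by
  have hedges := map_edges_liftWalk (c := c) hTle p
  have hne : p.edges.map c ≠ [] := by simpa using p.not_nil_of_ne haa'
  obtain ⟨hq, hqc⟩ := (hp.liftWalk hTle).isChain_map_edges_concat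
    (by rw [hedges]; exact hp.isChain_map_edges hc) hx'a'.symm
    (notMem_support_liftWalk hTle hx' p)
    (by rwa [liftColoring_of_notMem' hx', hedges])
  refine ⟨_, hq.isChain_map_edges_cons hqc hxa ?_ ?_⟩
  · rw [Walk.support_concat, List.mem_append, List.mem_singleton, not_or]
    exact ⟨notMem_support_liftWalk hTle hx p, hxx'⟩
  · rw [liftColoring_of_notMem hx, Walk.edges_concat, List.concat_eq_append, List.map_append,
      List.head?_append_of_ne_nil _ (hedges ▸ hne), hedges]
    exact hhead

lemma setOf_liftColoring_ne_one (hTle : T ≤ G.induce U) {S : Set (Sym2 U)}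
    (hS : S ⊆ T.edgeSet) (hc : ∀ e, c e ≠ 1 ↔ e ∈ S) :
    {e | e ∈ G.edgeSet ∧ liftColoring U c e ≠ 1} = Sym2.map Subtype.val '' S := by
  ext e
  constructor
  · rintro ⟨-, hne⟩
    by_cases hex : ∃ e' : Sym2 U, e'.map Subtype.val = e
    · obtain ⟨e', rfl⟩ := hex
      rw [liftColoring_map] at hne
      exact ⟨e', (hc e').1 hne, rfl⟩
    · exact absurd (Function.extend_apply' _ _ _ hex) hne
  · rintro ⟨e', he', rfl⟩
    refine ⟨?_, by rw [liftColoring_map]; exact (hc e').2 he'⟩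
    induction e' using Sym2.ind with
    | _ a b => exact hTle (hS he')

theorem properlyConnected_liftColoring (hTle : T ≤ G.induce U) (hT : T.Preconnected)
    (hc : T.IsProperEdgeColoring c)
    (hone : ∀ x ∉ U, ∀ v : U, ¬G.Adj x v → ∃ a : U, G.Adj x a ∧
      ∃ p : T.Walk a v, p.IsPath ∧ (p.edges.map c).head? ≠ some 1)
    (htwo : ∀ x ∉ U, ∀ x' ∉ U, x ≠ x' → ¬G.Adj x x' → ∃ a a' : U, a ≠ a' ∧ G.Adj x a ∧
      G.Adj x' a' ∧ ∃ p : T.Walk a a', p.IsPath ∧ (p.edges.map c).head? ≠ some 1 ∧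
        (p.edges.map c).getLast? ≠ some 1) :
    ProperlyConnected G (liftColoring U c) := by
  have inside (a b : U) : G.HasProperPath (liftColoring U c) a b := by
    obtain ⟨p, hp, -⟩ := (hT a b).exists_path_of_dist
    exact hasProperPath_of_isPath hTle hc hp
  have outside (x : V) (hx : x ∉ U) (v : U) : G.HasProperPath (liftColoring U c) x v := by
    by_cases hxv : G.Adj x v
    · exact hxv.hasProperPath
    obtain ⟨a, hxa, p, hp, hhead⟩ := hone x hx v hxv
    exact hasProperPath_of_anchor hTle hc hx hxa hp hhead
  intro u v huv
  by_cases hu : u ∈ U <;> by_cases hv : v ∈ U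
  · exact inside ⟨u, hu⟩ ⟨v, hv⟩
  · exact (outside v hv ⟨u, hu⟩).symm
  · exact outside u hu ⟨v, hv⟩
  · by_cases huv' : G.Adj u v
    · exact huv'.hasProperPath
    obtain ⟨a, a', haa', hua, hva', p, hp, hhead, hlast⟩ := htwo u hu v hv huv huv'
    exact hasProperPath_of_anchors hTle hc hu hv huv haa' hua hva' hp hhead hlast

end SimpleGraph

end LiftColoring

section Recoloring

namespace SimpleGraph

variable {W : Type*} {T : SimpleGraph W} {M : Set (Sym2 W)} {r : W} {ord : W ↪ ℕ}

open Classical in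
noncomputable def recoloring (T : SimpleGraph W) (M : Set (Sym2 W)) (r : W) (ord : W ↪ ℕ)
    (e : Sym2 W) : ℕ :=
  if e ∈ T.edgeSet \ M then T.treeEdgeColor r ord e + 2 else 1

lemma recoloring_ne_one_iff (e : Sym2 W) : T.recoloring M r ord e ≠ 1 ↔ e ∈ T.edgeSet \ M := by
  unfold recoloring
  split_ifs with he <;> simp [he]

lemma recoloring_of_mem {e : Sym2 W} (he : e ∈ T.edgeSet \ M) :
    T.recoloring M r ord e = T.treeEdgeColor r ord e + 2 :=
  if_pos he

lemma recoloring_of_mem_M {e : Sym2 W} (he : e ∈ M) : T.recoloring M r ord e = 1 :=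
  if_neg fun h => h.2 he

lemma IsTree.isProperEdgeColoring_recoloring [Finite W] (hT : T.IsTree)
    (hMM : ∀ {a b c : W}, s(a, b) ∈ M → s(a, c) ∈ M → b = c) :
    T.IsProperEdgeColoring (T.recoloring M r ord) := by
  intro u v w huv hvw huw
  by_cases h₁ : s(u, v) ∈ M <;> by_cases h₂ : s(v, w) ∈ M
  · exact absurd (hMM (Sym2.eq_swap ▸ h₁) h₂) huw
  · rw [recoloring_of_mem_M h₁, recoloring_of_mem ⟨hvw, h₂⟩]
    omega
  · rw [recoloring_of_mem ⟨huv, h₁⟩, recoloring_of_mem_M h₂]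
    omega
  · rw [recoloring_of_mem ⟨huv, h₁⟩, recoloring_of_mem ⟨hvw, h₂⟩]
    exact fun h => hT.isProperEdgeColoring_treeEdgeColor (r := r) ord huv hvw huw (by omega)

lemma head?_map_recoloring_ne_one {l : List (Sym2 W)} (hl : ∀ e ∈ l, e ∈ T.edgeSet)
    (hM : ∀ e ∈ l.head?, e ∉ M) : (l.map (T.recoloring M r ord)).head? ≠ some 1 := by
  rw [List.head?_map]
  cases hh : l.head? with
  | none => simp
  | some e =>
    simpa using (recoloring_ne_one_iff e).mpr
      ⟨hl e (List.mem_of_mem_head? hh), hM e hh⟩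

lemma ncard_image_recoloring_le [Finite W] (hT : T.IsTree) :
    (T.recoloring M r ord '' (T.edgeSet \ M)).ncard ≤ maxDeg T := by
  have hsub : T.recoloring M r ord '' (T.edgeSet \ M) ⊆ ↑(Finset.Ico 2 (maxDeg T + 2)) := by
    rintro _ ⟨e, he, rfl⟩
    induction e using Sym2.ind with
    | _ a b =>
      have := hT.treeEdgeColor_lt_maxDeg (r := r) ord (T.mem_edgeSet.mp he.1)
      simp only [Finset.coe_Ico, Set.mem_Ico, recoloring_of_mem he]
      omega
  have := Set.ncard_le_ncard hsub (Finset.finite_toSet _)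
  rwa [Set.ncard_coe_finset, Nat.card_Ico, Nat.add_sub_cancel] at this

end SimpleGraph

end Recoloring

section LeafDeletion

variable {V : Type*} {G : SimpleGraph V} {U : Set V} {T : SimpleGraph U}

lemma vdeg_eq_degree {W : Type*} (T : SimpleGraph W) (v : W) [Fintype (T.neighborSet v)] :
    vdeg T v = T.degree v := by
  rw [vdeg, Set.ncard_eq_toFinset_card', ← T.card_neighborSet_eq_degree, Set.toFinset_card]

lemma connected_induce_diff_singleton [Finite V] (hTle : T ≤ G.induce U) (hT : T.Connected)
    {ℓ : U} (hℓ : vdeg T ℓ = 1) : (G.induce (U \ {(ℓ : V)})).Connected := by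
  classical
  have := Fintype.ofFinite (T.neighborSet ℓ)
  refine (hT.induce_compl_singleton_of_degree_eq_one ((vdeg_eq_degree T ℓ).symm.trans hℓ)).map
    (⟨fun v => ⟨v.1.1, v.1.2, fun h => v.2 (Subtype.ext h)⟩, fun h => hTle h⟩ :
      T.induce {ℓ}ᶜ →g G.induce (U \ {(ℓ : V)})) ?_
  rintro ⟨v, hvU, hvℓ⟩
  exact ⟨⟨⟨v, hvU⟩, fun h => hvℓ (congrArg Subtype.val h)⟩, rfl⟩

/-- Deleting a leaf of the spanning tree keeps `G[U]` connected, so by the minimality of `U` it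
must lower the independence number. -/
lemma mem_of_vdeg_eq_one [Finite V] (hTle : T ≤ G.induce U) (hT : T.Connected)
    (hmin : ∀ W : Set V, (G.induce W).Connected →
      indepNum (G.induce W) = indepNum G → U.ncard ≤ W.ncard)
    {I : Finset V} (hIU : ↑I ⊆ U) (hI : IndepSet G I) (hIcard : indepNum G ≤ #I)
    {ℓ : U} (hℓ : vdeg T ℓ = 1) : (ℓ : V) ∈ I := by
  by_contra hℓI
  have hαW : indepNum (G.induce (U \ {(ℓ : V)})) = indepNum G :=
    (indepNum_induce_le _).antisymm <| hIcard.trans <| hI.card_le_indepNum_induce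
      fun y hy => ⟨hIU hy, fun h => hℓI (h ▸ hy)⟩
  have hle := hmin _ (connected_induce_diff_singleton hTle hT hℓ) hαW
  have hlt := Set.ncard_sdiff_singleton_lt_of_mem ℓ.2 (Set.toFinite U)
  omega

end LeafDeletion

section PendantEdges

variable {V : Type*} {G : SimpleGraph V} {U : Set V} {T : SimpleGraph U} {M : Set (Sym2 U)}
  {a b c : U}

def PendantEdges (G : SimpleGraph V) (T : SimpleGraph U) (M : Set (Sym2 U)) : Prop :=
  ∀ e ∈ M, ∃ w w' : U, e = s(w, w') ∧ vdeg T w = 1 ∧ vdeg T w' = 2 ∧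
    ∀ x : V, x ∉ U → G.Adj x ↑w → G.Adj x ↑w'

def IsPendantLeaf (T : SimpleGraph U) (M : Set (Sym2 U)) (a : U) : Prop :=
  vdeg T a = 1 ∧ ∃ b, s(a, b) ∈ M

lemma PendantEdges.of_mem_of_vdeg_eq_one (hM : PendantEdges G T M) (h : s(a, b) ∈ M)
    (ha : vdeg T a = 1) : vdeg T b = 2 ∧ ∀ x : V, x ∉ U → G.Adj x a → G.Adj x b := by
  obtain ⟨w, w', he, hw, hw', hx⟩ := hM _ h
  rcases Sym2.eq_iff.mp he with ⟨rfl, rfl⟩ | ⟨rfl, rfl⟩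
  · exact ⟨hw', hx⟩
  · omega

lemma PendantEdges.vdeg_eq_one_of_mem (hM : PendantEdges G T M) (h : s(a, b) ∈ M)
    (ha : vdeg T a ≠ 1) : vdeg T b = 1 := by
  obtain ⟨w, w', he, hw, -, -⟩ := hM _ h
  rcases Sym2.eq_iff.mp he with ⟨rfl, rfl⟩ | ⟨rfl, rfl⟩
  · exact absurd hw ha
  · exact hw

lemma PendantEdges.isPendantLeaf_of_mem (hM : PendantEdges G T M) (h : s(a, b) ∈ M)
    (ha : ¬IsPendantLeaf T M a) : IsPendantLeaf T M b :=
  ⟨hM.vdeg_eq_one_of_mem h fun h1 => ha ⟨h1, b, h⟩, a, Sym2.eq_swap ▸ h⟩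

lemma PendantEdges.exists_adj_not_isPendantLeaf (hM : PendantEdges G T M) {x : V} (hx : x ∉ U)
    (hxa : G.Adj x a) : ∃ b : U, G.Adj x b ∧ ¬IsPendantLeaf T M b ∧ (b = a ∨ s(a, b) ∈ M) := by
  by_cases ha : IsPendantLeaf T M a
  · obtain ⟨ha1, b, hab⟩ := ha
    have hb := hM.of_mem_of_vdeg_eq_one hab ha1
    exact ⟨b, hb.2 x hx hxa, fun h => by have := h.1; omega, Or.inr hab⟩
  · exact ⟨a, hxa, ha, Or.inl rfl⟩

/-- Otherwise `T` is the path `b - a - c`, and a maximum independent set, which contains the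
leaves `b` and `c`, has only two vertices. -/
lemma PendantEdges.eq_of_mem_of_mem [Finite V] (hM : PendantEdges G T M) (hME : M ⊆ T.edgeSet)
    (hTle : T ≤ G.induce U) (hT : T.Preconnected) {I : Finset V} (hIU : ↑I ⊆ U)
    (hI : IndepSet G I) (hI3 : 3 ≤ #I) (hleaf : ∀ ℓ : U, vdeg T ℓ = 1 → (ℓ : V) ∈ I)
    (hab : s(a, b) ∈ M) (hac : s(a, c) ∈ M) : b = c := by
  classical
  have hTab : T.Adj a b := hME hab
  have hTac : T.Adj a c := hME hac
  by_contra hbc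
  by_cases ha : vdeg T a = 1
  · have hc : c ∈ T.neighborSet a := hTac
    rw [SimpleGraph.neighborSet_eq_singleton_of_vdeg_eq_one ha hTab] at hc
    exact hbc hc.symm
  have hb := hM.vdeg_eq_one_of_mem hab ha
  have hc := hM.vdeg_eq_one_of_mem hac ha
  have ha2 := (hM.of_mem_of_vdeg_eq_one (Sym2.eq_swap ▸ hab) hb).1
  have hU (y : U) : y ∈ ({a, b, c} : Set U) := by
    refine hT.mem_of_neighborSet_subset (fun u hu => ?_) (Set.mem_insert a _) y
    rcases hu with rfl | rfl | rfl
    · rw [SimpleGraph.neighborSet_eq_pair_of_vdeg_eq_two ha2 hTab hTac hbc]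
      exact Set.subset_insert _ _
    · rw [SimpleGraph.neighborSet_eq_singleton_of_vdeg_eq_one hb hTab.symm]
      exact Set.singleton_subset_iff.mpr (Set.mem_insert _ _)
    · rw [SimpleGraph.neighborSet_eq_singleton_of_vdeg_eq_one hc hTac.symm]
      exact Set.singleton_subset_iff.mpr (Set.mem_insert _ _)
  have haI : (a : V) ∉ I := fun haI =>
    hI haI (hleaf b hb) (Subtype.coe_ne_coe.mpr hTab.ne) (hTle hTab)
  have hIbc : I ⊆ {(b : V), (c : V)} := fun y hy => by
    rcases hU ⟨y, hIU hy⟩ with h | h | h <;> obtain rfl := congrArg Subtype.val h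
    · exact absurd hy haI
    · simp
    · simp
  have := (Finset.card_le_card hIbc).trans Finset.card_le_two
  omega

lemma PendantEdges.exists_anchor [Finite V] (hM : PendantEdges G T M) (hME : M ⊆ T.edgeSet)
    (hTle : T ≤ G.induce U) (hMM : ∀ {a b c : U}, s(a, b) ∈ M → s(a, c) ∈ M → b = c)
    {I : Finset V} (hIU : ↑I ⊆ U) (hI : IndepSet G I) (hIcard : indepNum G ≤ #I)
    (hleaf : ∀ ℓ : U, vdeg T ℓ = 1 → (ℓ : V) ∈ I) {x : V} (hx : x ∉ U) {v : U}
    (hxv : ¬G.Adj x v) : ∃ a : U, G.Adj x a ∧ ¬IsPendantLeaf T M a ∧ s(a, v) ∉ M := by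
  obtain ⟨y, hyI, hxy⟩ := hI.exists_adj_of_indepNum_le hIcard fun h => hx (hIU h)
  obtain ⟨b, hxb, hb, hby⟩ := hM.exists_adj_not_isPendantLeaf (a := ⟨y, hIU hyI⟩) hx hxy
  refine ⟨b, hxb, hb, fun hbv => ?_⟩
  have hvI := hleaf v (hM.isPendantLeaf_of_mem hbv hb).1
  have hTbv : T.Adj b v := hME hbv
  rcases hby with rfl | hyb
  · exact hI hyI hvI (Subtype.coe_ne_coe.mpr hTbv.ne) (hTle hTbv)
  · exact hxv (hMM (Sym2.eq_swap ▸ hyb) hbv ▸ hxy)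

lemma PendantEdges.exists_anchors [Finite V] (hM : PendantEdges G T M) (hME : M ⊆ T.edgeSet)
    (hTle : T ≤ G.induce U) (hMM : ∀ {a b c : U}, s(a, b) ∈ M → s(a, c) ∈ M → b = c)
    {I : Finset V} (hIU : ↑I ⊆ U) (hI : IndepSet G I) (hIcard : indepNum G ≤ #I)
    {x x' : V} (hx : x ∉ U) (hx' : x' ∉ U) (hxx' : x ≠ x') (hadj : ¬G.Adj x x') :
    ∃ a a' : U, a ≠ a' ∧ G.Adj x a ∧ G.Adj x' a' ∧
      ¬IsPendantLeaf T M a ∧ ¬IsPendantLeaf T M a' := by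
  obtain ⟨y, hy, y', hy', hyy', hxy, hxy'⟩ := hI.exists_adj_adj_ne_of_indepNum_le hIcard
    (fun h => hx (hIU h)) (fun h => hx' (hIU h)) hxx' hadj
  obtain ⟨b, hxb, hb, hby⟩ := hM.exists_adj_not_isPendantLeaf (a := ⟨y, hIU hy⟩) hx hxy
  obtain ⟨b', hxb', hb', hby'⟩ := hM.exists_adj_not_isPendantLeaf (a := ⟨y', hIU hy'⟩) hx' hxy'
  refine ⟨b, b', ?_, hxb, hxb', hb, hb'⟩
  rintro rfl
  have hindep (h : s((⟨y, hIU hy⟩ : U), ⟨y', hIU hy'⟩) ∈ M) : False :=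
    hI hy hy' hyy' (hTle (hME h))
  rcases hby with rfl | hyb <;> rcases hby' with h | hyb'
  · exact hyy' (congrArg Subtype.val h)
  · exact hindep (Sym2.eq_swap ▸ hyb')
  · exact hindep (h ▸ hyb)
  · exact hyy' (congrArg Subtype.val (hMM (Sym2.eq_swap ▸ hyb) (Sym2.eq_swap ▸ hyb')))

lemma PendantEdges.forall_mem_head?_edges_notMem [Finite U] (hM : PendantEdges G T M)
    (ha : ¬IsPendantLeaf T M a) (hab : s(a, b) ∉ M) {p : T.Walk a b}
    (hp : p.IsPath) : ∀ e ∈ p.edges.head?, e ∉ M := by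
  cases p with
  | nil => simp
  | @cons _ d _ h q =>
    rintro e he heM
    simp only [SimpleGraph.Walk.edges_cons, List.head?_cons, Option.mem_some_iff] at he
    subst he
    have hd := hM.vdeg_eq_one_of_mem heM fun h1 => ha ⟨h1, d, heM⟩
    cases q with
    | nil => exact hab heM
    | @cons _ f _ h' q' =>
      have hf : f ∈ T.neighborSet d := h'
      rw [SimpleGraph.neighborSet_eq_singleton_of_vdeg_eq_one hd h.symm] at hf
      subst hf
      exact (SimpleGraph.Walk.cons_isPath_iff _ _).mp hp |>.2 (by simp)

end PendantEdges

section PcOptBound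

variable {V : Type*} {G : SimpleGraph V} {U : Set V} {T : SimpleGraph U} {M : Set (Sym2 U)}

lemma PendantEdges.properlyConnected_liftColoring_recoloring [Finite V]
    (hM : PendantEdges G T M) (hME : M ⊆ T.edgeSet) (hTle : T ≤ G.induce U) (hT : T.IsTree)
    (hMM : ∀ {a b c : U}, s(a, b) ∈ M → s(a, c) ∈ M → b = c)
    {I : Finset V} (hIU : ↑I ⊆ U) (hI : IndepSet G I) (hIcard : indepNum G ≤ #I)
    (hleaf : ∀ ℓ : U, vdeg T ℓ = 1 → (ℓ : V) ∈ I) (r : U) (ord : U ↪ ℕ) :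
    ProperlyConnected G (SimpleGraph.liftColoring U (T.recoloring M r ord)) := by
  have hpath (a b : U) : ∃ p : T.Walk a b, p.IsPath := (hT.existsUnique_path a b).exists
  have hhead {a b : U} (ha : ¬IsPendantLeaf T M a) (hab : s(a, b) ∉ M) {p : T.Walk a b}
      (hp : p.IsPath) : (p.edges.map (T.recoloring M r ord)).head? ≠ some 1 :=
    SimpleGraph.head?_map_recoloring_ne_one (fun _ he => p.edges_subset_edgeSet he)
      (hM.forall_mem_head?_edges_notMem ha hab hp)
  refine SimpleGraph.properlyConnected_liftColoring hTle hT.connected.preconnected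
    (hT.isProperEdgeColoring_recoloring hMM) (fun x hx v hxv => ?_)
    (fun x hx x' hx' hxx' hadj => ?_)
  · obtain ⟨a, hxa, ha, hav⟩ := hM.exists_anchor hME hTle hMM hIU hI hIcard hleaf hx hxv
    obtain ⟨p, hp⟩ := hpath a v
    exact ⟨a, hxa, p, hp, hhead ha hav hp⟩
  · obtain ⟨a, a', haa', hxa, hxa', ha, ha'⟩ :=
      hM.exists_anchors hME hTle hMM hIU hI hIcard hx hx' hxx' hadj
    have haa'M : s(a, a') ∉ M := fun h => ha' (hM.isPendantLeaf_of_mem h ha)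
    obtain ⟨p, hp⟩ := hpath a a'
    refine ⟨a, a', haa', hxa, hxa', p, hp, hhead ha haa'M hp, ?_⟩
    have := hhead ha' (Sym2.eq_swap ▸ haa'M) hp.reverse
    rwa [SimpleGraph.Walk.edges_reverse, List.map_reverse, List.head?_reverse] at this

lemma pcOpt_le_of_properlyConnected_liftColoring_recoloring [Finite V] (hTle : T ≤ G.induce U)
    (hT : T.IsTree) (hME : M ⊆ T.edgeSet) {r : U} {ord : U ↪ ℕ}
    (hPC : ProperlyConnected G (SimpleGraph.liftColoring U (T.recoloring M r ord))) :
    pcOpt G ≤ T.edgeSet.ncard + maxDeg T - M.ncard := by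
  set c := T.recoloring M r ord
  have hrecolored := SimpleGraph.setOf_liftColoring_ne_one (c := c) hTle Set.sdiff_subset
    SimpleGraph.recoloring_ne_one_iff
  calc pcOpt G ≤ _ := Nat.sInf_le ⟨_, hPC, rfl⟩
    _ = (T.edgeSet \ M).ncard + (c '' (T.edgeSet \ M)).ncard := by
      rw [hrecolored, Set.ncard_image_of_injective _ (Sym2.map.injective Subtype.val_injective),
        Set.image_image]
      simp only [SimpleGraph.liftColoring_map]
    _ ≤ T.edgeSet.ncard - M.ncard + maxDeg T := by
      rw [Set.ncard_sdiff hME]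
      exact Nat.add_le_add_left (SimpleGraph.ncard_image_recoloring_le hT) _
    _ ≤ T.edgeSet.ncard + maxDeg T - M.ncard := by
      have := Set.ncard_le_ncard hME
      omega

end PcOptBound

theorem pcOpt_le_key_lemma_general {V : Type*} [Fintype V] (G : SimpleGraph V)
    (hα : 3 ≤ indepNum G) (U : Set V)
    (hαU : indepNum (G.induce U) = indepNum G)
    (hmin : ∀ W : Set V, (G.induce W).Connected →
      indepNum (G.induce W) = indepNum G → U.ncard ≤ W.ncard)
    (T : SimpleGraph U) (hTle : T ≤ G.induce U) (hT : T.IsTree)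
    (M : Set (Sym2 U)) (hME : M ⊆ T.edgeSet)
    (hMprop : ∀ e ∈ M, ∃ w w' : U, e = s(w, w') ∧ vdeg T w = 1 ∧ vdeg T w' = 2 ∧
      ∀ x : V, x ∉ U → G.Adj x ↑w → G.Adj x ↑w') :
    pcOpt G ≤ T.edgeSet.ncard + maxDeg T - M.ncard := by
  have hM : PendantEdges G T M := hMprop
  obtain ⟨r⟩ := hT.connected.nonempty
  obtain ⟨ord, hord⟩ := exists_injective_nat U
  obtain ⟨I, hIU, hI, hIcard⟩ := exists_indepSet_subset_card_eq_indepNum_induce G U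
  rw [hαU] at hIcard
  have hleaf (ℓ : U) (hℓ : vdeg T ℓ = 1) : (ℓ : V) ∈ I :=
    mem_of_vdeg_eq_one hTle hT.connected hmin hIU hI hIcard.ge hℓ
  have hMM {a b c : U} (hab : s(a, b) ∈ M) (hac : s(a, c) ∈ M) : b = c :=
    hM.eq_of_mem_of_mem hME hTle hT.connected.preconnected hIU hI (hIcard ▸ hα) hleaf hab hac
  exact pcOpt_le_of_properlyConnected_liftColoring_recoloring hTle hT hME
    (hM.properlyConnected_liftColoring_recoloring hME hTle hT hMM hIU hI hIcard.ge hleaf r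
      ⟨ord, hord⟩)

/-- Key lemma: let `G` be connected with `α(G) ≥ 3`, `H = G.induce U` a minimum
connected induced subgraph with `α(H) = α(G)`, `T` a spanning tree of `H`, and
`M` a set of edges `ww'` of `T` with `deg_T w = 1`, `deg_T w' = 2` such that
every `x ∉ V(T)` adjacent to `w` in `G` is also adjacent to `w'`. Then
`pc_opt(G) ≤ |E(T)| + Δ(T) − |M|`. -/
theorem pcOpt_le_key_lemma {V : Type*} [Fintype V] (G : SimpleGraph V)
    (hG : G.Connected) (hα : 3 ≤ indepNum G) (U : Set V)
    (hU : (G.induce U).Connected) (hαU : indepNum (G.induce U) = indepNum G)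
    (hmin : ∀ W : Set V, (G.induce W).Connected →
      indepNum (G.induce W) = indepNum G → U.ncard ≤ W.ncard)
    (T : SimpleGraph U) (hTle : T ≤ G.induce U) (hT : T.IsTree)
    (M : Set (Sym2 U)) (hME : M ⊆ T.edgeSet)
    (hMprop : ∀ e ∈ M, ∃ w w' : U, e = s(w, w') ∧ vdeg T w = 1 ∧ vdeg T w' = 2 ∧
      ∀ x : V, x ∉ U → G.Adj x ↑w → G.Adj x ↑w') :
    pcOpt G ≤ T.edgeSet.ncard + maxDeg T - M.ncard :=
  pcOpt_le_key_lemma_general G hα U hαU hmin T hTle hT M hME hMprop
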